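/- Let A be a real symmetric positive semidefinite N×N matrix with A q = f solvable, and q⁰ ∈ ℝ^N. Suppose for each h > 0, δ > 0 we are given a real symmetric positive semidefinite N×N matrix A_h with ‖A_h − A‖ ≤ h and a vector f_δ with ‖f_δ − f‖ ≤ δ, and a parameter α(h,δ) > 0. Then for each h, δ the system (A_h + α(h,δ) I) q = f_δ + α(h,δ) q⁰ has a unique solution q^α_{hδ}; and if α(h,δ) → 0 and (h + δ)/α(h,δ) → 0 as h, δ → 0, then q^α_{hδ} converges to the solution of A q = f closest in Euclidean norm to q⁰ (the normal solution relative to q⁰). -/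

import Mathlib

open Matrix
open scoped Matrix.Norms.L2Operator

/-- Matrix–vector multiplication as a map between Euclidean spaces. -/
noncomputable def mulE {K N : ℕ} (A : Matrix (Fin K) (Fin N) ℝ)
    (v : EuclideanSpace ℝ (Fin N)) : EuclideanSpace ℝ (Fin K) :=
  Matrix.toEuclideanLin A v

/-!
Since `qn` is the point of the affine space `qn + ker A` closest to `q₀`, the difference
`qn - q₀` is orthogonal to `ker A = (range A)ᗮ`, so `qn - q₀ = A u` for some `u`.
For `a > 0` put `z := qn - a • u`. Then the regularized solution `q` satisfies
`(A_h + a)(q - z) = (f_δ - f) - (A_h - A) qn + a (A_h - A) u + a² u`, whose norm is at most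
`δ + h ‖qn‖ + a (h + a) ‖u‖`, and the coercivity `a ‖v‖ ≤ ‖(A_h + a) v‖` of the regularized
operator turns this into `‖q - qn‖ ≤ (h + δ)/a · (1 + ‖qn‖) + (h + 2a) ‖u‖`.
-/

open scoped RealInnerProductSpace

namespace LinearMap

variable {E : Type*} [NormedAddCommGroup E] [InnerProductSpace ℝ E]

theorem IsPositive.mul_norm_le_norm_add_smul {S : E →ₗ[ℝ] E} (hS : S.IsPositive) (a : ℝ)
    (v : E) : a * ‖v‖ ≤ ‖S v + a • v‖ := by
  rcases (norm_nonneg v).eq_or_lt with hv | hv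
  · rw [← hv, mul_zero]; exact norm_nonneg _
  refine le_of_mul_le_mul_right ?_ hv
  calc a * ‖v‖ * ‖v‖ ≤ ⟪S v, v⟫ + a * ‖v‖ ^ 2 := by nlinarith [hS.inner_nonneg_left v]
    _ = ⟪S v + a • v, v⟫ := by
      rw [inner_add_left, real_inner_smul_left, real_inner_self_eq_norm_sq]
    _ ≤ ‖S v + a • v‖ * ‖v‖ := real_inner_le_norm _ _

theorem IsSymmetric.sub_mem_range_of_forall_norm_sub_le [FiniteDimensional ℝ E]
    {T : E →ₗ[ℝ] E} (hT : T.IsSymmetric) {f q₀ qn : E} (hqn : T qn = f)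
    (hmin : ∀ p, T p = f → ‖qn - q₀‖ ≤ ‖p - q₀‖) : qn - q₀ ∈ range T := by
  have hproj : ‖(qn - q₀) - 0‖ = ⨅ w : (ker T : Set E), ‖(qn - q₀) - w‖ := by
    refine le_antisymm (le_ciInf fun w => ?_) (ciInf_le ⟨0, ?_⟩ (⟨0, zero_mem _⟩ : ker T))
    · calc ‖(qn - q₀) - 0‖ ≤ ‖(qn - w) - q₀‖ := by
            rw [sub_zero]; exact hmin _ (by rw [map_sub, hqn, mem_ker.1 w.2, sub_zero])
        _ = ‖(qn - q₀) - w‖ := by rw [sub_right_comm]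
    · rintro _ ⟨w, rfl⟩; exact norm_nonneg _
  have hperp : qn - q₀ ∈ (ker T)ᗮ := by
    rw [Submodule.mem_orthogonal']
    simpa using (Submodule.norm_eq_iInf_iff_real_inner_eq_zero _ (zero_mem _)).1 hproj
  rwa [← hT.orthogonal_range, Submodule.orthogonal_orthogonal] at hperp

theorem IsPositive.norm_sub_le_of_lavrentiev {S T : E →ₗ[ℝ] E} (hS : S.IsPositive)
    {a h δ : ℝ} (ha : 0 < a) (hh : 0 ≤ h) (hST : ∀ v, ‖S v - T v‖ ≤ h * ‖v‖)
    {f g q₀ qn u x : E} (hg : ‖g - f‖ ≤ δ) (hqn : T qn = f) (hu : T u = qn - q₀)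
    (hx : S x + a • x = g + a • q₀) :
    ‖x - qn‖ ≤ (h + δ) / a * (1 + ‖qn‖) + (h + 2 * a) * ‖u‖ := by
  set z := qn - a • u
  have hres : S (x - z) + a • (x - z)
      = (g - f) - (S qn - T qn) + a • (S u - T u) + (a * a) • u := by
    simp only [z, map_sub, map_smul]
    linear_combination (norm := module) hx - hqn + a • hu
  have hres_le : a * ‖x - z‖ ≤ δ + h * ‖qn‖ + a * ((h + a) * ‖u‖) := by
    calc a * ‖x - z‖ ≤ ‖S (x - z) + a • (x - z)‖ := hS.mul_norm_le_norm_add_smul a _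
      _ ≤ ‖g - f‖ + ‖S qn - T qn‖ + ‖a • (S u - T u)‖ + ‖(a * a) • u‖ := by
        rw [hres]
        exact norm_add₃_le.trans (by gcongr; exact norm_sub_le _ _)
      _ ≤ δ + h * ‖qn‖ + a * (h * ‖u‖) + a * a * ‖u‖ := by
        simp only [norm_smul, Real.norm_of_nonneg ha.le, Real.norm_of_nonneg (mul_self_nonneg a)]
        gcongr
        exacts [hST qn, hST u]
      _ = δ + h * ‖qn‖ + a * ((h + a) * ‖u‖) := by ring
  have hδ : 0 ≤ δ := (norm_nonneg _).trans hg
  have hxz : ‖x - z‖ ≤ (h + δ) / a * (1 + ‖qn‖) + (h + a) * ‖u‖ := by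
    rw [div_mul_eq_mul_div, div_add' _ _ _ ha.ne', le_div_iff₀ ha]
    nlinarith [mul_nonneg hδ (norm_nonneg qn)]
  calc ‖x - qn‖ = ‖(x - z) - a • u‖ := by congr 1; simp only [z]; abel
    _ ≤ ‖x - z‖ + ‖a • u‖ := norm_sub_le _ _
    _ ≤ (h + δ) / a * (1 + ‖qn‖) + (h + 2 * a) * ‖u‖ := by
      rw [norm_smul, Real.norm_of_nonneg ha.le]; linarith

end LinearMap

section mulE

variable {N : ℕ}

theorem mulE_add_smul_one (A : Matrix (Fin N) (Fin N) ℝ) (a : ℝ) (v : EuclideanSpace ℝ (Fin N)) :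
    mulE (A + a • (1 : Matrix (Fin N) (Fin N) ℝ)) v = mulE A v + a • v := by
  simp [mulE]

theorem mulE_mul (B C : Matrix (Fin N) (Fin N) ℝ) (v : EuclideanSpace ℝ (Fin N)) :
    mulE (B * C) v = mulE B (mulE C v) := by
  change toEuclideanCLM (𝕜 := ℝ) (B * C) v = _
  rw [map_mul]
  rfl

theorem mulE_one (v : EuclideanSpace ℝ (Fin N)) : mulE (1 : Matrix (Fin N) (Fin N) ℝ) v = v := by
  change toEuclideanCLM (𝕜 := ℝ) 1 v = v
  rw [map_one]
  rfl

theorem mulE_eq_iff_eq_mulE_inv {B : Matrix (Fin N) (Fin N) ℝ} (hB : IsUnit B)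
    {q g : EuclideanSpace ℝ (Fin N)} : mulE B q = g ↔ q = mulE B⁻¹ g := by
  have hdet := (isUnit_iff_isUnit_det B).1 hB
  constructor
  · rintro rfl; rw [← mulE_mul, nonsing_inv_mul B hdet, mulE_one]
  · rintro rfl; rw [← mulE_mul, mul_nonsing_inv B hdet, mulE_one]

theorem norm_mulE_sub_mulE_le (M A : Matrix (Fin N) (Fin N) ℝ) (v : EuclideanSpace ℝ (Fin N)) :
    ‖mulE M v - mulE A v‖ ≤ ‖M - A‖ * ‖v‖ := by
  rw [mulE, mulE, ← LinearMap.sub_apply, ← map_sub]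
  exact l2_opNorm_mulVec (M - A) v

end mulE

namespace Matrix

variable {N : ℕ}

theorem PosSemidef.isUnit_add_smul_one {A : Matrix (Fin N) (Fin N) ℝ} (hA : A.PosSemidef)
    {a : ℝ} (ha : 0 < a) : IsUnit (A + a • (1 : Matrix (Fin N) (Fin N) ℝ)) :=
  (PosDef.posSemidef_add hA (PosDef.one.smul ha)).isUnit

theorem PosSemidef.norm_mulE_inv_sub_le {A M : Matrix (Fin N) (Fin N) ℝ} (hM : M.PosSemidef)
    {a h δ : ℝ} (ha : 0 < a) (hMA : ‖M - A‖ ≤ h) {f g q₀ qn u : EuclideanSpace ℝ (Fin N)}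
    (hg : ‖g - f‖ ≤ δ) (hqn : mulE A qn = f) (hu : mulE A u = qn - q₀) :
    ‖mulE (M + a • (1 : Matrix (Fin N) (Fin N) ℝ))⁻¹ (g + a • q₀) - qn‖
      ≤ (h + δ) / a * (1 + ‖qn‖) + (h + 2 * a) * ‖u‖ :=
  (isPositive_toEuclideanLin_iff.2 hM).norm_sub_le_of_lavrentiev (T := toEuclideanLin A) ha
    ((norm_nonneg _).trans hMA)
    (fun v => (norm_mulE_sub_mulE_le M A v).trans (by gcongr)) hg hqn hu
    (by rw [← mulE, ← mulE_add_smul_one, mulE_eq_iff_eq_mulE_inv (hM.isUnit_add_smul_one ha)])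

end Matrix

open Filter Topology

theorem lavrentiev_perturbed_tendsto_normal_solution_general
    (N : ℕ) (A : Matrix (Fin N) (Fin N) ℝ) (hA : A.PosSemidef)
    (f : EuclideanSpace ℝ (Fin N))
    (q0 qn : EuclideanSpace ℝ (Fin N))
    (hqn : mulE A qn = f ∧ ∀ p, mulE A p = f → ‖qn - q0‖ ≤ ‖p - q0‖)
    (Ah : ℝ → Matrix (Fin N) (Fin N) ℝ) (fδ : ℝ → EuclideanSpace ℝ (Fin N))
    (α : ℝ → ℝ → ℝ)
    (hAh : ∀ h : ℝ, 0 < h → (Ah h).PosSemidef ∧ ‖Ah h - A‖ ≤ h)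
    (hfδ : ∀ δ : ℝ, 0 < δ → ‖fδ δ - f‖ ≤ δ)
    (hα : ∀ h δ : ℝ, 0 < h → 0 < δ → 0 < α h δ) :
    (∀ h δ : ℝ, 0 < h → 0 < δ →
        ∃! q : EuclideanSpace ℝ (Fin N),
          mulE (Ah h + α h δ • (1 : Matrix (Fin N) (Fin N) ℝ)) q = fδ δ + α h δ • q0) ∧
      (Filter.Tendsto (fun p : ℝ × ℝ => α p.1 p.2)
          (nhdsWithin 0 (Set.Ioi 0) ×ˢ nhdsWithin 0 (Set.Ioi 0)) (nhds 0) →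
        Filter.Tendsto (fun p : ℝ × ℝ => (p.1 + p.2) / α p.1 p.2)
          (nhdsWithin 0 (Set.Ioi 0) ×ˢ nhdsWithin 0 (Set.Ioi 0)) (nhds 0) →
        Filter.Tendsto
          (fun p : ℝ × ℝ =>
            mulE ((Ah p.1 + α p.1 p.2 • (1 : Matrix (Fin N) (Fin N) ℝ))⁻¹)
              (fδ p.2 + α p.1 p.2 • q0))
          (nhdsWithin 0 (Set.Ioi 0) ×ˢ nhdsWithin 0 (Set.Ioi 0)) (nhds qn)) := by
  refine ⟨fun h δ hh hδ => ?_, fun hα₀ hratio => ?_⟩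
  · have hB := (hAh h hh).1.isUnit_add_smul_one (hα h δ hh hδ)
    exact ⟨_, (mulE_eq_iff_eq_mulE_inv hB).2 rfl, fun q hq => (mulE_eq_iff_eq_mulE_inv hB).1 hq⟩
  obtain ⟨u, hu⟩ := (isPositive_toEuclideanLin_iff.2 hA).isSymmetric
    |>.sub_mem_range_of_forall_norm_sub_le hqn.1 hqn.2
  have hbound : Tendsto (fun p : ℝ × ℝ => (p.1 + p.2) / α p.1 p.2 * (1 + ‖qn‖)
      + (p.1 + 2 * α p.1 p.2) * ‖u‖) (𝓝[>] 0 ×ˢ 𝓝[>] 0) (𝓝 0) := by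
    have hfst : Tendsto (fun p : ℝ × ℝ => p.1) (𝓝[>] 0 ×ˢ 𝓝[>] 0) (𝓝 0) :=
      tendsto_fst.mono_right nhdsWithin_le_nhds
    simpa using (hratio.mul_const _).add ((hfst.add (hα₀.const_mul 2)).mul_const ‖u‖)
  rw [tendsto_iff_norm_sub_tendsto_zero]
  refine squeeze_zero' (.of_forall fun _ => norm_nonneg _) ?_ hbound
  filter_upwards [prod_mem_prod self_mem_nhdsWithin self_mem_nhdsWithin] with p ⟨hh, hδ⟩
  exact (hAh p.1 hh).1.norm_mulE_inv_sub_le (hα p.1 p.2 hh hδ) (hAh p.1 hh).2 (hfδ p.2 hδ) hqn.1 hu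

/-- **Lavrentiev regularization with perturbed data.** For symmetric positive
semidefinite data `A_h` with `‖A_h - A‖ ≤ h` (L² operator norm) and `f_δ` with
`‖f_δ - f‖ ≤ δ`, each system `(A_h + α(h,δ) I) q = f_δ + α(h,δ) q⁰` has a unique solution,
and if `α(h,δ) → 0` and `(h + δ)/α(h,δ) → 0` as `h, δ → 0⁺`, the solutions converge to the
solution of `A q = f` closest to `q⁰`. -/
theorem lavrentiev_perturbed_tendsto_normal_solution
    (N : ℕ) (A : Matrix (Fin N) (Fin N) ℝ) (hA : A.PosSemidef)
    (f : EuclideanSpace ℝ (Fin N)) (hsolv : ∃ q, mulE A q = f)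
    (q0 qn : EuclideanSpace ℝ (Fin N))
    (hqn : mulE A qn = f ∧ ∀ p, mulE A p = f → ‖qn - q0‖ ≤ ‖p - q0‖)
    (Ah : ℝ → Matrix (Fin N) (Fin N) ℝ) (fδ : ℝ → EuclideanSpace ℝ (Fin N))
    (α : ℝ → ℝ → ℝ)
    (hAh : ∀ h : ℝ, 0 < h → (Ah h).PosSemidef ∧ ‖Ah h - A‖ ≤ h)
    (hfδ : ∀ δ : ℝ, 0 < δ → ‖fδ δ - f‖ ≤ δ)
    (hα : ∀ h δ : ℝ, 0 < h → 0 < δ → 0 < α h δ) :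
    (∀ h δ : ℝ, 0 < h → 0 < δ →
        ∃! q : EuclideanSpace ℝ (Fin N),
          mulE (Ah h + α h δ • (1 : Matrix (Fin N) (Fin N) ℝ)) q = fδ δ + α h δ • q0) ∧
      (Filter.Tendsto (fun p : ℝ × ℝ => α p.1 p.2)
          (nhdsWithin 0 (Set.Ioi 0) ×ˢ nhdsWithin 0 (Set.Ioi 0)) (nhds 0) →
        Filter.Tendsto (fun p : ℝ × ℝ => (p.1 + p.2) / α p.1 p.2)
          (nhdsWithin 0 (Set.Ioi 0) ×ˢ nhdsWithin 0 (Set.Ioi 0)) (nhds 0) →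
        Filter.Tendsto
          (fun p : ℝ × ℝ =>
            mulE ((Ah p.1 + α p.1 p.2 • (1 : Matrix (Fin N) (Fin N) ℝ))⁻¹)
              (fδ p.2 + α p.1 p.2 • q0))
          (nhdsWithin 0 (Set.Ioi 0) ×ˢ nhdsWithin 0 (Set.Ioi 0)) (nhds qn)) :=
  lavrentiev_perturbed_tendsto_normal_solution_general N A hA f q0 qn hqn Ah fδ α hAh hfδ hα
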